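/- Let l, m, n be positive integers with gcd(l,m) = gcd(l,n) = 1, and consider the left action of the group of unit quaternions on 𝔑^l_{m,n}. For a point [(p,(z,w))] ∈ 𝔑^l_{m,n}, the stabilizer subgroup is p·μ_d·p⁻¹, the conjugate by p of the cyclic group μ_d = {x ∈ 𝕊¹ : x^d = 1} of d-th roots of unity, where d = m if w = 0, d = n if z = 0, and d = gcd(m,n) if both z ≠ 0 and w ≠ 0. In particular the isotropy groups of the action are cyclic of orders m, n and gcd(m,n). -/

import Mathlib

/-!
`g` fixes `[(p,(z,w))]` iff `g·p = p·x⁻ˡ` for some `x ∈ 𝕊¹` in the isotropy group of `(z,w)`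
under `x·(z,w) = (xᵐz, xⁿw)`; that group is `μ_d`, with `d = m`, `n` or `gcd(m,n)` according to
which coordinates vanish. As `l` is prime to `d`, `x ↦ x⁻ˡ` permutes `μ_d`, so the stabilizer
is `p·μ_d·p⁻¹`.
-/

noncomputable section

open Quaternion

/-- The embedding of `ℂ` into the quaternions, sending `a + b·i` to the quaternion `a + b·i`. -/
def cq (x : ℂ) : Quaternion ℝ := ⟨x.re, x.im, 0, 0⟩

/-- The total space `𝕊³_ℍ × 𝕊³`: pairs of a unit quaternion and a point `(z,w) ∈ ℂ²`
with `|z|² + |w|² = 1`. -/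
abbrev TotalSpace : Type :=
  {a : Quaternion ℝ × (ℂ × ℂ) // ‖a.1‖ = 1 ∧ Complex.normSq a.2.1 + Complex.normSq a.2.2 = 1}

/-- The circle action `x · (p,(z,w)) = (p x^l, (x^m z, x^n w))` on the ambient space. -/
def circleAct (l m n : ℕ) (x : Circle) (a : Quaternion ℝ × (ℂ × ℂ)) :
    Quaternion ℝ × (ℂ × ℂ) :=
  (a.1 * cq ((x : ℂ) ^ l), ((x : ℂ) ^ m * a.2.1, (x : ℂ) ^ n * a.2.2))

/-- The orbit relation of the circle action on `𝕊³_ℍ × 𝕊³`. -/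
def NRel (l m n : ℕ) (a b : TotalSpace) : Prop :=
  ∃ x : Circle, circleAct l m n x a.1 = b.1

/-- The orbit space `𝔑^l_{m,n}`, with the quotient topology. -/
abbrev NSpace (l m n : ℕ) : Type := Quot (NRel l m n)


/-- The left action of the group of unit quaternions on `𝔑^l_{m,n}`,
`g·[(p,(z,w))] = [(gp,(z,w))]`. -/
def quatAct (l m n : ℕ) (g : Metric.sphere (0 : Quaternion ℝ) 1) :
    NSpace l m n → NSpace l m n :=
  Quot.lift
    (fun a => Quot.mk _ ⟨((g : Quaternion ℝ) * a.1.1, a.1.2), by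
      refine ⟨?_, a.2.2⟩
      have hg : ‖(g : Quaternion ℝ)‖ = 1 := mem_sphere_zero_iff_norm.mp g.2
      rw [norm_mul, hg, a.2.1, mul_one]⟩)
    (by
      rintro ⟨⟨p, z, w⟩, hp, hzw⟩ ⟨⟨p', z', w'⟩, hp', hzw'⟩ ⟨x, hx⟩
      apply Quot.sound
      refine ⟨x, ?_⟩
      simp only [circleAct, Prod.mk.injEq] at hx ⊢
      exact ⟨by rw [mul_assoc, hx.1], hx.2⟩)


/-- The stabilizer of a point `X ∈ 𝔑^l_{m,n}` for the left action of the unit quaternions. -/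
def stabilizerSet (l m n : ℕ) (X : NSpace l m n) : Set (Metric.sphere (0 : Quaternion ℝ) 1) :=
  {g | quatAct l m n g X = X}

/-- The conjugate `p·μ_d·p⁻¹` of the group `μ_d = {x ∈ 𝕊¹ : x^d = 1}` of `d`-th roots of
unity by the quaternion `p`, as a subset of the unit quaternions. -/
def conjRootsOfUnity (p : Quaternion ℝ) (d : ℕ) : Set (Metric.sphere (0 : Quaternion ℝ) 1) :=
  {g | ∃ x : ℂ, x ^ d = 1 ∧ (g : Quaternion ℝ) = p * cq x * p⁻¹}

lemma cq_eq_ofComplex (x : ℂ) : cq x = ofComplex x := rfl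

lemma norm_cq (x : ℂ) : ‖cq x‖ = ‖x‖ := by
  rw [← sq_eq_sq₀ (norm_nonneg _) (norm_nonneg _), ← Complex.normSq_eq_norm_sq, sq,
    ← Quaternion.normSq_eq_norm_mul_self, Quaternion.normSq_def', Complex.normSq_apply]
  simp [cq, sq]

lemma mul_mul_cq_eq_iff {g p : Quaternion ℝ} (hp : p ≠ 0) (u : Circle) :
    g * p * cq u = p ↔ g = p * cq ↑u⁻¹ * p⁻¹ := by
  rw [cq_eq_ofComplex, cq_eq_ofComplex, Circle.coe_inv, map_inv₀, eq_mul_inv_iff_mul_eq₀ hp,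
    eq_mul_inv_iff_mul_eq₀ ((map_ne_zero ofComplex).2 u.coe_ne_zero)]

theorem exists_pow_eq_of_coprime {M : Type*} [Monoid M] {x : M} {l d : ℕ} (hld : l.Coprime d)
    (hx : x ^ d = 1) : ∃ y : M, y ^ d = 1 ∧ y ^ l = x := by
  obtain ⟨k, hk⟩ := exists_pow_eq_self_of_coprime
    (Nat.Coprime.coprime_dvd_right (orderOf_dvd_of_pow_eq_one hx) hld)
  exact ⟨x ^ k, by rw [pow_right_comm, hx, one_pow], by rw [pow_right_comm, hk]⟩

section OrbitRelation

variable (l m n : ℕ)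

lemma circleAct_one (a : Quaternion ℝ × (ℂ × ℂ)) : circleAct l m n 1 a = a := by
  simp [circleAct, cq_eq_ofComplex]

lemma circleAct_circleAct (x y : Circle) (a : Quaternion ℝ × (ℂ × ℂ)) :
    circleAct l m n x (circleAct l m n y a) = circleAct l m n (y * x) a := by
  simp only [circleAct, Circle.coe_mul, mul_pow, cq_eq_ofComplex, map_mul, mul_assoc,
    Prod.mk.injEq]
  exact ⟨trivial, mul_left_comm .., mul_left_comm ..⟩

lemma equivalence_nRel : Equivalence (NRel l m n) where
  refl _ := ⟨1, circleAct_one l m n _⟩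
  symm := fun ⟨x, hx⟩ => ⟨x⁻¹, by rw [← hx, circleAct_circleAct, mul_inv_cancel, circleAct_one]⟩
  trans := fun ⟨x, hx⟩ ⟨y, hy⟩ => ⟨x * y, by rw [← circleAct_circleAct, hx, hy]⟩

lemma quot_mk_eq_quot_mk_iff (a b : TotalSpace) :
    Quot.mk (NRel l m n) a = Quot.mk (NRel l m n) b ↔ NRel l m n a b := by
  rw [Quot.eq, (equivalence_nRel l m n).eqvGen_iff]

lemma mem_stabilizerSet_iff (a : TotalSpace) (g : Metric.sphere (0 : Quaternion ℝ) 1) :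
    g ∈ stabilizerSet l m n (Quot.mk (NRel l m n) a) ↔
      ∃ x : Circle, (g : Quaternion ℝ) * a.1.1 * cq ((x : ℂ) ^ l) = a.1.1 ∧
        (x : ℂ) ^ m * a.1.2.1 = a.1.2.1 ∧ (x : ℂ) ^ n * a.1.2.2 = a.1.2.2 := by
  obtain ⟨⟨p, z, w⟩, -⟩ := a
  simp only [stabilizerSet, Set.mem_ofPred_eq, quatAct, quot_mk_eq_quot_mk_iff, NRel, circleAct,
    Prod.mk.injEq]

end OrbitRelation

theorem stabilizerSet_eq_conjRootsOfUnity_of_coprime {l m n d : ℕ} (hld : l.Coprime d)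
    (a : TotalSpace)
    (hfix : ∀ x : Circle, (x : ℂ) ^ d = 1 ↔
      (x : ℂ) ^ m * a.1.2.1 = a.1.2.1 ∧ (x : ℂ) ^ n * a.1.2.2 = a.1.2.2) :
    stabilizerSet l m n (Quot.mk (NRel l m n) a) = conjRootsOfUnity a.1.1 d := by
  have hp : a.1.1 ≠ 0 := norm_ne_zero_iff.1 (by rw [a.2.1]; exact one_ne_zero)
  ext g
  rw [mem_stabilizerSet_iff]
  constructor
  · rintro ⟨x, hg, hx⟩
    refine ⟨↑(x ^ l)⁻¹, ?_, (mul_mul_cq_eq_iff hp _).1 hg⟩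
    rw [Circle.coe_inv, Circle.coe_pow, inv_pow, ← pow_mul, pow_mul', (hfix x).2 hx, one_pow,
      inv_one]
  · rintro ⟨y, hyd, hg⟩
    -- `y` lies on the circle because `g = p·y·p⁻¹` and `p` do
    have hy : ‖y‖ = 1 := by
      rw [← norm_cq, ← mem_sphere_zero_iff_norm.1 g.2, hg, norm_mul, norm_mul, norm_inv, a.2.1,
        one_mul, inv_one, mul_one]
    let u : Circle := ⟨y, mem_sphere_zero_iff_norm.2 hy⟩
    have hud : u⁻¹ ^ d = 1 := Circle.coe_injective <| by
      rw [Circle.coe_pow, Circle.coe_inv, inv_pow, show (u : ℂ) = y from rfl, hyd, inv_one,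
        Circle.coe_one]
    obtain ⟨x, hxd, hxl⟩ := exists_pow_eq_of_coprime hld hud
    refine ⟨x, ?_, (hfix x).1 (by rw [← Circle.coe_pow, hxd, Circle.coe_one])⟩
    rw [← Circle.coe_pow, mul_mul_cq_eq_iff hp, hxl, inv_inv, hg]

theorem stabilizer_eq_conj_rootsOfUnity_general (l m n : ℕ)
    (hlm : Nat.gcd l m = 1) (hln : Nat.gcd l n = 1)
    (a : TotalSpace) :
    (a.1.2.2 = 0 →
      stabilizerSet l m n (Quot.mk (NRel l m n) a) = conjRootsOfUnity a.1.1 m) ∧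
    (a.1.2.1 = 0 →
      stabilizerSet l m n (Quot.mk (NRel l m n) a) = conjRootsOfUnity a.1.1 n) ∧
    (a.1.2.1 ≠ 0 → a.1.2.2 ≠ 0 →
      stabilizerSet l m n (Quot.mk (NRel l m n) a) =
        conjRootsOfUnity a.1.1 (Nat.gcd m n)) := by
  have hzw := a.2.2
  refine ⟨fun hw => ?_, fun hz => ?_, fun hz hw => ?_⟩
  · have hz : a.1.2.1 ≠ 0 := by rintro hz; simp [hz, hw] at hzw
    exact stabilizerSet_eq_conjRootsOfUnity_of_coprime hlm a fun x => by
      simp [mul_eq_right₀ hz, hw]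
  · have hw : a.1.2.2 ≠ 0 := by rintro hw; simp [hz, hw] at hzw
    exact stabilizerSet_eq_conjRootsOfUnity_of_coprime hln a fun x => by
      simp [mul_eq_right₀ hw, hz]
  · exact stabilizerSet_eq_conjRootsOfUnity_of_coprime
      (Nat.Coprime.coprime_dvd_right (Nat.gcd_dvd_left m n) hlm) a fun x => by
        rw [pow_gcd_eq_one, mul_eq_right₀ hz, mul_eq_right₀ hw]

/-- **Isotropy groups of the unit-quaternion action on `𝔑^l_{m,n}`.**
Let `l, m, n` be positive integers with `gcd(l,m) = gcd(l,n) = 1`.  For a point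
`[(p,(z,w))] ∈ 𝔑^l_{m,n}`, the stabilizer subgroup of the left action of the unit quaternions
is `p·μ_d·p⁻¹`, the conjugate by `p` of the cyclic group of `d`-th roots of unity, where
`d = m` if `w = 0`, `d = n` if `z = 0`, and `d = gcd(m,n)` if both `z ≠ 0` and `w ≠ 0`. -/
theorem stabilizer_eq_conj_rootsOfUnity (l m n : ℕ)
    (hl : 0 < l) (hm : 0 < m) (hn : 0 < n)
    (hlm : Nat.gcd l m = 1) (hln : Nat.gcd l n = 1)
    (a : TotalSpace) :
    (a.1.2.2 = 0 →
      stabilizerSet l m n (Quot.mk (NRel l m n) a) = conjRootsOfUnity a.1.1 m) ∧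
    (a.1.2.1 = 0 →
      stabilizerSet l m n (Quot.mk (NRel l m n) a) = conjRootsOfUnity a.1.1 n) ∧
    (a.1.2.1 ≠ 0 → a.1.2.2 ≠ 0 →
      stabilizerSet l m n (Quot.mk (NRel l m n) a) =
        conjRootsOfUnity a.1.1 (Nat.gcd m n)) :=
  stabilizer_eq_conj_rootsOfUnity_general l m n hlm hln a
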